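/- arXiv:2207.13231 — 2 statements merged into one kernel-verified Lean document; each statement's English description precedes it below -/
import Mathlib

section
/- Let H be a finite-dimensional complex inner product space, A a self-adjoint linear operator on H, and U a unitary operator on H. Suppose that for every eigenvalue a of A, with Π_a the orthogonal projection onto the eigenspace of A for a, and for every vector ψ ∈ H, one has ⟨ψ, Π_a ψ⟩ = ⟨Uψ, Π_a Uψ⟩. Then A commutes with U, i.e. AU = UA. -/
/-!
Since `⟪ψ, Π ψ⟫ = ‖Π ψ‖²` for an orthogonal projection `Π`, the hypothesis says that `U` preserves
`‖Π_a ψ‖` for every state. A vector lies in the range of `Π_a` exactly when `‖Π_a ψ‖ = ‖ψ‖`, and `U`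
is an isometry, so `U` maps every eigenspace of `A` into itself. As the eigenspaces of a self-adjoint
operator span the space and `A` acts on each of them as a scalar, `A` and `U` commute.
-/

open scoped InnerProductSpace

namespace Submodule

variable {𝕜 E : Type*} [RCLike 𝕜] [NormedAddCommGroup E] [InnerProductSpace 𝕜 E]

lemma inner_orthogonalProjectionOnto_self (K : Submodule 𝕜 E) [K.HasOrthogonalProjection] (v : E) :
    ⟪v, (K.orthogonalProjectionOnto v : E)⟫_𝕜 = (‖K.orthogonalProjectionOnto v‖ ^ 2 : ℝ) := by
  rw [← inner_conj_symm, ← inner_orthogonalProjectionOnto_eq_of_mem_left,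
    inner_self_eq_norm_sq_to_K, ← RCLike.ofReal_pow, RCLike.conj_ofReal]

lemma mapsTo_of_forall_inner_orthogonalProjectionOnto_eq (K : Submodule 𝕜 E)
    [K.HasOrthogonalProjection] (U : E →ₗᵢ[𝕜] E)
    (hU : ∀ ψ : E, ⟪ψ, (K.orthogonalProjectionOnto ψ : E)⟫_𝕜
      = ⟪U ψ, (K.orthogonalProjectionOnto (U ψ) : E)⟫_𝕜) :
    Set.MapsTo U K K := by
  intro x hx
  have hnorm : ‖K.orthogonalProjectionOnto x‖ = ‖K.orthogonalProjectionOnto (U x)‖ := by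
    have := hU x
    rw [inner_orthogonalProjectionOnto_self, inner_orthogonalProjectionOnto_self] at this
    exact (sq_eq_sq₀ (norm_nonneg _) (norm_nonneg _)).mp (by exact_mod_cast this)
  rw [SetLike.mem_coe, mem_iff_norm_starProjection] at hx ⊢
  rw [U.norm_map, ← hx, starProjection_apply, starProjection_apply, norm_coe, norm_coe, hnorm]

end Submodule

namespace Module.End

variable {R M : Type*} [CommRing R] [AddCommGroup M] [Module R M]

lemma commute_of_mapsTo_eigenspace {f g : End R M} (hf : ⨆ a, f.eigenspace a = ⊤)
    (hg : ∀ a, f.HasEigenvalue a → Set.MapsTo g (f.eigenspace a) (f.eigenspace a)) :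
    Commute f g := by
  rw [Commute, SemiconjBy, ← LinearMap.eqLocus_eq_top, eq_top_iff, ← hf]
  refine iSup_le fun a x hx => ?_
  by_cases ha : f.HasEigenvalue a
  · have hgx := hg a ha hx
    rw [SetLike.mem_coe, mem_eigenspace_iff] at hgx
    rw [mem_eigenspace_iff] at hx
    rw [LinearMap.mem_eqLocus, mul_apply, mul_apply, hgx, hx, map_smul]
  · rw [hasEigenvalue_iff, not_not] at ha
    rw [ha, Submodule.mem_bot] at hx
    simp [hx]

end Module.End

/-- If `A` is a self-adjoint operator on a finite-dimensional complex
inner product space and `U` is unitary, and for every eigenvalue `a` of `A` the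
outcome probability `⟨ψ, Π_a ψ⟩` (with `Π_a` the orthogonal projection onto the
eigenspace for `a`) is unchanged when every state `ψ` is replaced by `U ψ`,
then `A` commutes with `U`. -/
theorem stmt_1 {H : Type*} [NormedAddCommGroup H] [InnerProductSpace ℂ H]
    [FiniteDimensional ℂ H] (A : H →ₗ[ℂ] H) (hA : A.IsSymmetric)
    (U : H ≃ₗᵢ[ℂ] H)
    (hprob : ∀ a : ℂ, Module.End.HasEigenvalue A a → ∀ ψ : H,
      (inner ℂ ψ (↑(Submodule.orthogonalProjectionOnto (Module.End.eigenspace A a) ψ)) : ℂ)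
        = inner ℂ (U ψ) (↑(Submodule.orthogonalProjectionOnto (Module.End.eigenspace A a) (U ψ)))) :
    ∀ x : H, A (U x) = U (A x) := by
  have hspan : ⨆ a, Module.End.eigenspace A a = ⊤ :=
    Submodule.orthogonal_eq_bot_iff.mp hA.orthogonalComplement_iSup_eigenspaces_eq_bot
  have hcomm : Commute A (U : H →ₗ[ℂ] H) :=
    Module.End.commute_of_mapsTo_eigenspace hspan fun a ha =>
      (Module.End.eigenspace A a).mapsTo_of_forall_inner_orthogonalProjectionOnto_eq
        U.toLinearIsometry (hprob a ha)
  exact fun x => LinearMap.congr_fun hcomm.eq x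
end

section
/- Let G be a finite group, ρ a unitary representation of G on a finite-dimensional complex inner product space H, and E ⊆ H an irreducible G-invariant subspace. Let ϱ be a positive semidefinite operator on H with Tr ϱ = 1, whose range is contained in E, and which commutes with ρ(g) for all g ∈ G. Then ϱ = (1/dim E) Π_E, where Π_E is the orthogonal projection onto E. -/
/-- A subspace `W` is invariant under the unitary representation `ρ` of `G` if
`ρ g` maps `W` into itself for every `g`. -/
def IsInvariantSubspace {H : Type*} [NormedAddCommGroup H] [InnerProductSpace ℂ H]
    {G : Type*} [Group G] (ρ : G →* (H ≃ₗᵢ[ℂ] H)) (W : Submodule ℂ H) : Prop :=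
  ∀ g : G, ∀ x ∈ W, ρ g x ∈ W

/-- An invariant subspace `W` is irreducible if it is nonzero and contains no invariant
subspace other than `⊥` and `W` itself. -/
def IsIrreducibleSubspace {H : Type*} [NormedAddCommGroup H] [InnerProductSpace ℂ H]
    {G : Type*} [Group G] (ρ : G →* (H ≃ₗᵢ[ℂ] H)) (W : Submodule ℂ H) : Prop :=
  W ≠ ⊥ ∧ ∀ U : Submodule ℂ H, U ≤ W → IsInvariantSubspace ρ U → U = ⊥ ∨ U = W


/-! By Schur's lemma `ϱ` acts on `E` as a scalar `μ`; being symmetric with range in `E`, it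
vanishes on `Eᗮ`, so `ϱ = μ • Π_E`, and taking traces gives `μ * dim E = 1`. -/

open Module

section Schur

variable {G : Type*} [Group G] {H : Type*} [NormedAddCommGroup H] [InnerProductSpace ℂ H]
  [FiniteDimensional ℂ H] {ρ : G →* (H ≃ₗᵢ[ℂ] H)} {E : Submodule ℂ H}

/-- Schur's lemma: `f` restricted to `E` has an eigenvector since `ℂ` is algebraically closed,
and its eigenspace, cut down to `E`, is invariant, hence all of `E`. -/
theorem IsIrreducibleSubspace.exists_eq_smul_of_commute (hEinv : IsInvariantSubspace ρ E)
    (hEirr : IsIrreducibleSubspace ρ E) (f : H →ₗ[ℂ] H) (hfE : ∀ x ∈ E, f x ∈ E)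
    (hcomm : ∀ (g : G) (x : H), f (ρ g x) = ρ g (f x)) :
    ∃ μ : ℂ, ∀ x ∈ E, f x = μ • x := by
  have : Nontrivial E := Submodule.nontrivial_iff_ne_bot.mpr hEirr.1
  obtain ⟨μ, hμ⟩ := End.exists_eigenvalue (f.restrict hfE)
  obtain ⟨v, hv⟩ := hμ.exists_hasEigenvector
  set U := E ⊓ End.eigenspace f μ
  have hUinv : IsInvariantSubspace ρ U := by
    rintro g x ⟨hxE, hxμ⟩
    refine ⟨hEinv g x hxE, ?_⟩
    rw [SetLike.mem_coe, End.mem_eigenspace_iff] at hxμ ⊢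
    rw [hcomm, hxμ, map_smul]
  have hvU : (v : H) ∈ U :=
    ⟨v.2, End.mem_eigenspace_iff.mpr (congrArg Subtype.val (End.mem_eigenspace_iff.mp hv.1))⟩
  have hUne : U ≠ ⊥ := fun h ↦ hv.2 (Subtype.ext (by simpa [h] using hvU))
  have hUE : U = E := (hEirr.2 U inf_le_left hUinv).resolve_left hUne
  exact ⟨μ, fun x hx ↦ End.mem_eigenspace_iff.mp (hUE.ge hx).2⟩

end Schur

section Projection

variable {𝕜 : Type*} [RCLike 𝕜] {H : Type*} [NormedAddCommGroup H] [InnerProductSpace 𝕜 H]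

theorem LinearMap.IsSymmetric.apply_eq_zero_of_mem_orthogonal {T : H →ₗ[𝕜] H}
    (hT : T.IsSymmetric) {K : Submodule 𝕜 H} (hrange : LinearMap.range T ≤ K) {x : H}
    (hx : x ∈ Kᗮ) : T x = 0 := by
  have hTTx : T (T x) ∈ K := hrange ⟨T x, rfl⟩
  refine (inner_self_eq_zero (𝕜 := 𝕜)).mp ?_
  rw [hT, ← inner_conj_symm, Submodule.inner_right_of_mem_orthogonal hTTx hx, map_zero]

theorem Submodule.eq_smul_starProjection_of_eqOn {K : Submodule 𝕜 H}
    [K.HasOrthogonalProjection] {T : H →ₗ[𝕜] H} {μ : 𝕜} (hK : ∀ x ∈ K, T x = μ • x)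
    (hKperp : ∀ x ∈ Kᗮ, T x = 0) :
    T = μ • K.starProjection.toLinearMap := by
  ext x
  calc T x = T (K.starProjection x) + T (x - K.starProjection x) := by
        rw [← map_add, add_sub_cancel]
    _ = μ • K.starProjection x := by
      rw [hK _ (K.starProjection_apply_mem x), hKperp _ (K.sub_starProjection_mem_orthogonal x),
        add_zero]

theorem Submodule.trace_starProjection [FiniteDimensional 𝕜 H] (K : Submodule 𝕜 H) :
    LinearMap.trace 𝕜 H K.starProjection.toLinearMap = finrank 𝕜 K :=
  LinearMap.IsProj.trace
    ⟨K.starProjection_apply_mem, fun _ hx ↦ K.starProjection_eq_self_iff.mpr hx⟩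

end Projection

theorem stmt_11_general {G : Type*} [Group G]
    {H : Type*} [NormedAddCommGroup H] [InnerProductSpace ℂ H] [FiniteDimensional ℂ H]
    (ρ : G →* (H ≃ₗᵢ[ℂ] H)) (E : Submodule ℂ H)
    (hEinv : IsInvariantSubspace ρ E) (hEirr : IsIrreducibleSubspace ρ E)
    (ϱ : H →ₗ[ℂ] H) (hsymm : ϱ.IsSymmetric)
    (htr : LinearMap.trace ℂ H ϱ = 1)
    (hrange : LinearMap.range ϱ ≤ E)
    (hcomm : ∀ (g : G) (x : H), ϱ (ρ g x) = ρ g (ϱ x)) :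
    ϱ = (Module.finrank ℂ E : ℂ)⁻¹ •
      (E.subtype ∘ₗ (E.orthogonalProjectionOnto).toLinearMap) := by
  obtain ⟨μ, hμ⟩ :=
    hEirr.exists_eq_smul_of_commute hEinv ϱ (fun x _ ↦ hrange ⟨x, rfl⟩) hcomm
  have hϱ : ϱ = μ • E.starProjection.toLinearMap :=
    E.eq_smul_starProjection_of_eqOn hμ fun _ ↦ hsymm.apply_eq_zero_of_mem_orthogonal hrange
  have hμdim : μ * finrank ℂ E = 1 := by
    rw [← E.trace_starProjection, ← smul_eq_mul, ← map_smul, ← hϱ, htr]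
  rw [hϱ, eq_inv_of_mul_eq_one_left hμdim]
  rfl

/-- maximal state preparation: If `ϱ` is a density operator (positive
semidefinite, trace one) on a finite-dimensional complex inner product space whose range
is contained in an irreducible invariant subspace `E` for a unitary representation of a
finite group `G`, and `ϱ` commutes with all `ρ g`, then `ϱ = (1/dim E) Π_E`, with
`Π_E` the orthogonal projection onto `E`. -/
theorem stmt_11 {G : Type*} [Group G] [Fintype G]
    {H : Type*} [NormedAddCommGroup H] [InnerProductSpace ℂ H] [FiniteDimensional ℂ H]
    (ρ : G →* (H ≃ₗᵢ[ℂ] H)) (E : Submodule ℂ H)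
    (hEinv : IsInvariantSubspace ρ E) (hEirr : IsIrreducibleSubspace ρ E)
    (ϱ : H →ₗ[ℂ] H) (hsymm : ϱ.IsSymmetric)
    (hpos : ∀ x : H, 0 ≤ (inner ℂ x (ϱ x) : ℂ).re)
    (htr : LinearMap.trace ℂ H ϱ = 1)
    (hrange : LinearMap.range ϱ ≤ E)
    (hcomm : ∀ (g : G) (x : H), ϱ (ρ g x) = ρ g (ϱ x)) :
    ϱ = (Module.finrank ℂ E : ℂ)⁻¹ •
      (E.subtype ∘ₗ (E.orthogonalProjectionOnto).toLinearMap) :=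
  stmt_11_general ρ E hEinv hEirr ϱ hsymm htr hrange hcomm
end
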